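/- Let X be a one-sided shift space over a finite alphabet 𝔞 and let 0 ≤ k ≤ l. Then for every j ∈ M_k^l, every h ∈ M_{k+1}^{l+2}, and every a ∈ 𝔞: ∑_{i∈M_k^{l+1}} A_{l+1}(h,i,a)·I_l(i,j) = ∑_{i∈M_{k+1}^{l+1}} I_{l+1}(h,i)·A_l(i,j,a). -/
import Mathlib


open scoped Classical

/-- The one-sided shift map on `ℕ → A`. -/
def shiftMap {A : Type*} (x : ℕ → A) : ℕ → A := fun i => x (i + 1)

/-- The point `ux` obtained by prepending the word `u` to `x`. -/
def prepend {A : Type*} (u : List A) (x : ℕ → A) : ℕ → A :=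
  fun i => if h : i < u.length then u.get ⟨i, h⟩ else x (i - u.length)

/-- `P_l(x) = {u ∈ 𝔞_l : ux ∈ X}`, the past of order `l` of `x ∈ X`. -/
def pastSet {A : Type*} (X : Set (ℕ → A)) (l : ℕ) (x : ℕ → A) : Set (List A) :=
  {u | u.length ≤ l ∧ prepend u x ∈ X}

/-- The `l`-past equivalence class `[x]_l = {y ∈ X : P_l(y) = P_l(x)}`. -/
def pastClass {A : Type*} (X : Set (ℕ → A)) (l : ℕ) (x : ℕ → A) : Set (ℕ → A) :=
  {y | y ∈ X ∧ pastSet X l y = pastSet X l x}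

/-- The (finite) collection `{E_1^l, …, E_{m(l)}^l}` of `l`-past equivalence classes. -/
def classes {A : Type*} (X : Set (ℕ → A)) (l : ℕ) : Set (Set (ℕ → A)) :=
  {E | ∃ x ∈ X, E = pastClass X l x}

/-- `uE = {ux : x ∈ E} ∩ X` for a word `u` and a set `E ⊆ X`. -/
def wordMulSet {A : Type*} (X : Set (ℕ → A)) (u : List A) (E : Set (ℕ → A)) :
    Set (ℕ → A) :=
  {z | z ∈ X ∧ ∃ x ∈ E, z = prepend u x}

/-- `M_k^l`: the collection of `l`-past equivalence classes `E` with `P_k(E) ≠ ∅`. -/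
def Mcl {A : Type*} (X : Set (ℕ → A)) (k l : ℕ) : Set (Set (ℕ → A)) :=
  {E | E ∈ classes X l ∧ ∃ x ∈ E, (pastSet X k x).Nonempty}

/-- The matrix entry `I_l(i,j)`: `1` if `E_i^{l+1} ⊆ E_j^l` and `0` otherwise. -/
noncomputable def Imat {A : Type*} (E F : Set (ℕ → A)) : ℤ :=
  if E ⊆ F then 1 else 0

/-- The matrix entry `A_l(i,j,a)`: `1` if `∅ ≠ aE_i^{l+1} ⊆ E_j^l` and `0` otherwise. -/
noncomputable def Amat {A : Type*} (X : Set (ℕ → A)) (a : A)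
    (E F : Set (ℕ → A)) : ℤ :=
  if (wordMulSet X [a] E).Nonempty ∧ wordMulSet X [a] E ⊆ F then 1 else 0

lemma classes_finite {A : Type*} [Finite A] (X : Set (ℕ → A)) (l : ℕ) :
    (classes X l).Finite := by
  have h1 : {u : List A | u.length ≤ l}.Finite := List.finite_length_le A l
  have h2 : {P : Set (List A) | P ⊆ {u | u.length ≤ l}}.Finite :=
    h1.finite_subsets
  refine Set.Finite.subset
    (h2.image (fun P => {y | y ∈ X ∧ pastSet X l y = P})) ?_
  rintro E ⟨x, hx, rfl⟩
  exact ⟨pastSet X l x, fun u hu => hu.1, rfl⟩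

instance McFinite {A : Type*} [Finite A] (X : Set (ℕ → A)) (k l : ℕ) :
    Finite ↥(Mcl X k l) :=
  ((classes_finite X l).subset (fun _ hE => hE.1)).to_subtype

/-- The group homomorphism between free abelian groups determined by the
matrix `T`: the basis vector `e_j` is sent to `∑_i T i j • e_i`. -/
noncomputable def matHom {ι κ : Type*} [Finite κ] (T : κ → ι → ℤ) :
    (ι →₀ ℤ) →+ (κ →₀ ℤ) :=
  Finsupp.liftAddHom fun j =>
    zmultiplesHom _ (Finsupp.equivFunOnFinite.symm fun i => T i j)

/-- The homomorphism `I_k^l : ℤ^{M_k^l} → ℤ^{M_k^{l+1}}`,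
`e_j ↦ ∑_{i ∈ M_k^{l+1}} I_l(i,j) e_i`. -/
noncomputable def Ihom {A : Type*} [Finite A] (X : Set (ℕ → A)) (k l : ℕ) :
    (↥(Mcl X k l) →₀ ℤ) →+ (↥(Mcl X k (l + 1)) →₀ ℤ) :=
  matHom fun i j => Imat (i : Set (ℕ → A)) (j : Set (ℕ → A))

/-- The homomorphism `A_k^l : ℤ^{M_k^l} → ℤ^{M_{k+1}^{l+1}}`,
`e_j ↦ ∑_{i ∈ M_{k+1}^{l+1}} ∑_{a ∈ 𝔞} A_l(i,j,a) e_i`. -/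
noncomputable def Ahom {A : Type*} [Fintype A] (X : Set (ℕ → A)) (k l : ℕ) :
    (↥(Mcl X k l) →₀ ℤ) →+ (↥(Mcl X (k + 1) (l + 1)) →₀ ℤ) :=
  matHom fun i j => ∑ a : A, Amat X a (i : Set (ℕ → A)) (j : Set (ℕ → A))

lemma prepend_nil' {A : Type*} (x : ℕ → A) : prepend ([] : List A) x = x := by
  funext i; simp [prepend]

lemma prepend_prepend {A : Type*} (u v : List A) (x : ℕ → A) :
    prepend u (prepend v x) = prepend (u ++ v) x := by
  funext i
  simp only [prepend, List.length_append, List.get_eq_getElem]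
  rcases lt_or_ge i u.length with h | h
  · rw [dif_pos h, dif_pos (by omega), List.getElem_append_left h]
  · rw [dif_neg (by omega)]
    rcases lt_or_ge (i - u.length) v.length with h2 | h2
    · rw [dif_pos h2, dif_pos (by omega), List.getElem_append_right h]
    · rw [dif_neg (by omega), dif_neg (by omega)]
      congr 1
      omega

lemma nil_mem_pastSet' {A : Type*} {X : Set (ℕ → A)} {k : ℕ} {x : ℕ → A}
    (hx : x ∈ X) : ([] : List A) ∈ pastSet X k x :=
  ⟨by simp, by rwa [prepend_nil']⟩

lemma mem_pastClass_self' {A : Type*} {X : Set (ℕ → A)} {l : ℕ} {x : ℕ → A}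
    (hx : x ∈ X) : x ∈ pastClass X l x := ⟨hx, rfl⟩

lemma pastClass_mem_Mcl' {A : Type*} {X : Set (ℕ → A)} {x : ℕ → A}
    (hx : x ∈ X) (k l : ℕ) : pastClass X l x ∈ Mcl X k l :=
  ⟨⟨x, hx, rfl⟩, x, mem_pastClass_self' hx, ⟨[], nil_mem_pastSet' hx⟩⟩

lemma pastClass_eq_of_mem' {A : Type*} {X : Set (ℕ → A)} {l : ℕ} {x y : ℕ → A}
    (h : y ∈ pastClass X l x) : pastClass X l y = pastClass X l x := by
  unfold pastClass
  rw [h.2]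

lemma pastSet_eq_of_le' {A : Type*} {X : Set (ℕ → A)} {k l : ℕ} (hkl : k ≤ l)
    {x y : ℕ → A} (h : pastSet X l y = pastSet X l x) :
    pastSet X k y = pastSet X k x := by
  ext u
  simp only [pastSet, Set.mem_setOf_eq]
  constructor
  · rintro ⟨h1, h2⟩
    exact ⟨h1, (h ▸ (⟨h1.trans hkl, h2⟩ : u ∈ pastSet X l y) : u ∈ pastSet X l x).2⟩
  · rintro ⟨h1, h2⟩
    exact ⟨h1, (h.symm ▸ (⟨h1.trans hkl, h2⟩ : u ∈ pastSet X l x) : u ∈ pastSet X l y).2⟩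

lemma pastClass_subset_of_le' {A : Type*} {X : Set (ℕ → A)} {k l : ℕ}
    (hkl : k ≤ l) (x : ℕ → A) : pastClass X l x ⊆ pastClass X k x :=
  fun _ hy => ⟨hy.1, pastSet_eq_of_le' hkl hy.2⟩

lemma prepend_single_mem' {A : Type*} {X : Set (ℕ → A)} {m : ℕ} {x y : ℕ → A}
    (a : A) (hy : y ∈ pastClass X (m + 1) x) (hax : prepend [a] x ∈ X) :
    prepend [a] y ∈ X ∧ prepend [a] y ∈ pastClass X m (prepend [a] x) := by
  have hmem : [a] ∈ pastSet X (m + 1) y := by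
    rw [hy.2]; exact ⟨by simp, hax⟩
  refine ⟨hmem.2, hmem.2, ?_⟩
  ext u
  simp only [pastSet, Set.mem_setOf_eq, prepend_prepend]
  constructor
  · rintro ⟨h1, h2⟩
    refine ⟨h1, ?_⟩
    have hu : u ++ [a] ∈ pastSet X (m + 1) y := ⟨by simp; omega, h2⟩
    rw [hy.2] at hu; exact hu.2
  · rintro ⟨h1, h2⟩
    refine ⟨h1, ?_⟩
    have hu : u ++ [a] ∈ pastSet X (m + 1) x := ⟨by simp; omega, h2⟩
    rw [← hy.2] at hu; exact hu.2

lemma wordMulSet_single_subset' {A : Type*} {X : Set (ℕ → A)} {m : ℕ}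
    {x : ℕ → A} {a : A} (hax : prepend [a] x ∈ X) :
    wordMulSet X [a] (pastClass X (m + 1) x) ⊆ pastClass X m (prepend [a] x) := by
  rintro z ⟨hzX, y, hy, rfl⟩
  exact (prepend_single_mem' a hy hax).2

lemma prepend_mem_of_nonempty' {A : Type*} {X : Set (ℕ → A)} {m : ℕ}
    {x : ℕ → A} {a : A}
    (h : (wordMulSet X [a] (pastClass X (m + 1) x)).Nonempty) :
    prepend [a] x ∈ X := by
  obtain ⟨z, hzX, y, hy, rfl⟩ := h
  have hu : [a] ∈ pastSet X (m + 1) y := ⟨by simp, hzX⟩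
  rw [hy.2] at hu; exact hu.2

lemma prepend_mem_wordMulSet' {A : Type*} {X : Set (ℕ → A)} {E : Set (ℕ → A)}
    {x : ℕ → A} {a : A} (hx : x ∈ E) (hax : prepend [a] x ∈ X) :
    prepend [a] x ∈ wordMulSet X [a] E := ⟨hax, x, hx, rfl⟩

/-- for `0 ≤ k ≤ l`, every `j ∈ M_k^l`, `h ∈ M_{k+1}^{l+2}` and `a ∈ 𝔞`:
`∑_{i ∈ M_k^{l+1}} A_{l+1}(h,i,a)·I_l(i,j) = ∑_{i ∈ M_{k+1}^{l+1}} I_{l+1}(h,i)·A_l(i,j,a)`. -/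
theorem matrix_entries_commute {A : Type*} [Fintype A] [Nonempty A]
    [TopologicalSpace A] [DiscreteTopology A]
    (X : Set (ℕ → A)) (hXclosed : IsClosed X) (hXinv : ∀ x ∈ X, shiftMap x ∈ X)
    (k l : ℕ) (hkl : k ≤ l)
    (Ej Eh : Set (ℕ → A)) (hj : Ej ∈ Mcl X k l) (hh : Eh ∈ Mcl X (k + 1) (l + 2))
    (a : A) :
    ∑ᶠ Ei ∈ Mcl X k (l + 1), Amat X a Eh Ei * Imat Ei Ej =
      ∑ᶠ Ei ∈ Mcl X (k + 1) (l + 1), Imat Eh Ei * Amat X a Ei Ej := by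
  obtain ⟨⟨x₀, hx₀X, rfl⟩, -⟩ := hh
  obtain ⟨⟨y₀, hy₀X, rfl⟩, -⟩ := hj
  have hS : (Mcl X k (l + 1)).Finite :=
    (classes_finite X (l + 1)).subset (fun _ hE => hE.1)
  have hS' : (Mcl X (k + 1) (l + 1)).Finite :=
    (classes_finite X (l + 1)).subset (fun _ hE => hE.1)
  rw [← Set.Finite.coe_toFinset hS, ← Set.Finite.coe_toFinset hS',
    finsum_mem_coe_finset, finsum_mem_coe_finset]
  have hEh : pastClass X (l + 2) x₀ = pastClass X ((l + 1) + 1) x₀ := rfl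
  by_cases hc : prepend [a] x₀ ∈ X ∧ prepend [a] x₀ ∈ pastClass X l y₀
  · obtain ⟨hax, haj⟩ := hc
    have hEj : pastClass X l (prepend [a] x₀) = pastClass X l y₀ :=
      pastClass_eq_of_mem' haj
    -- LHS = 1
    have hL : ∑ Ei ∈ hS.toFinset,
        Amat X a (pastClass X (l + 2) x₀) Ei * Imat Ei (pastClass X l y₀) = 1 := by
      rw [Finset.sum_eq_single_of_mem (pastClass X (l + 1) (prepend [a] x₀))
        (hS.mem_toFinset.2 (pastClass_mem_Mcl' hax k (l + 1)))]
      · have hA : Amat X a (pastClass X (l + 2) x₀)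
            (pastClass X (l + 1) (prepend [a] x₀)) = 1 := by
          unfold Amat
          exact if_pos ⟨⟨prepend [a] x₀,
            prepend_mem_wordMulSet' (mem_pastClass_self' hx₀X) hax⟩,
            wordMulSet_single_subset' (m := l + 1) hax⟩
        have hI : Imat (pastClass X (l + 1) (prepend [a] x₀))
            (pastClass X l y₀) = 1 := by
          unfold Imat
          exact if_pos (fun z hz =>
            hEj ▸ pastClass_subset_of_le' (Nat.le_succ l) _ hz)
        rw [hA, hI, one_mul]
      · intro Ei hEi hne
        obtain ⟨⟨y, hyX, rfl⟩, -⟩ := hS.mem_toFinset.1 hEi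
        rw [Amat, if_neg, zero_mul]
        rintro ⟨-, hsub⟩
        exact hne (pastClass_eq_of_mem'
          (hsub (prepend_mem_wordMulSet' (mem_pastClass_self' hx₀X) hax))).symm
    -- RHS = 1
    have hR : ∑ Ei ∈ hS'.toFinset,
        Imat (pastClass X (l + 2) x₀) Ei * Amat X a Ei (pastClass X l y₀) = 1 := by
      rw [Finset.sum_eq_single_of_mem (pastClass X (l + 1) x₀)
        (hS'.mem_toFinset.2 (pastClass_mem_Mcl' hx₀X (k + 1) (l + 1)))]
      · have hI : Imat (pastClass X (l + 2) x₀) (pastClass X (l + 1) x₀) = 1 := by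
          unfold Imat
          exact if_pos (pastClass_subset_of_le' (k := l + 1) (l := l + 2)
            (Nat.le_succ (l + 1)) x₀)
        have hA : Amat X a (pastClass X (l + 1) x₀) (pastClass X l y₀) = 1 := by
          unfold Amat
          exact if_pos ⟨⟨prepend [a] x₀,
            prepend_mem_wordMulSet' (mem_pastClass_self' hx₀X) hax⟩,
            fun z hz => hEj ▸ wordMulSet_single_subset' (m := l) hax hz⟩
        rw [hI, hA, one_mul]
      · intro Ei hEi hne
        obtain ⟨⟨y, hyX, rfl⟩, -⟩ := hS'.mem_toFinset.1 hEi
        rw [Imat, if_neg, zero_mul]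
        intro hsub
        exact hne (pastClass_eq_of_mem' (hsub (mem_pastClass_self' hx₀X))).symm
    rw [hL, hR]
  · -- both sides are 0
    rw [Finset.sum_eq_zero, Finset.sum_eq_zero]
    · intro Ei hEi
      obtain ⟨⟨y, hyX, rfl⟩, -⟩ := hS'.mem_toFinset.1 hEi
      by_cases h1 : pastClass X (l + 2) x₀ ⊆ pastClass X (l + 1) y
      · have hx₀Ei : pastClass X (l + 1) y = pastClass X (l + 1) x₀ :=
          (pastClass_eq_of_mem' (h1 (mem_pastClass_self' hx₀X))).symm
        rw [Amat, if_neg, mul_zero]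
        rintro ⟨hne, hsub⟩
        rw [hx₀Ei] at hne hsub
        have hax : prepend [a] x₀ ∈ X := prepend_mem_of_nonempty' hne
        exact hc ⟨hax,
          hsub (prepend_mem_wordMulSet' (mem_pastClass_self' hx₀X) hax)⟩
      · rw [Imat, if_neg h1, zero_mul]
    · intro Ei hEi
      by_cases h1 : (wordMulSet X [a] (pastClass X (l + 2) x₀)).Nonempty ∧
          wordMulSet X [a] (pastClass X (l + 2) x₀) ⊆ Ei
      · have hax : prepend [a] x₀ ∈ X := prepend_mem_of_nonempty' (m := l + 1) h1.1
        rw [Imat, if_neg, mul_zero]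
        intro h2
        exact hc ⟨hax, h2 (h1.2
          (prepend_mem_wordMulSet' (mem_pastClass_self' hx₀X) hax))⟩
      · rw [Amat, if_neg h1, zero_mul]
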